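/- arXiv:1411.7417 — 3 statements merged into one kernel-verified Lean document; each statement's English description precedes it below -/
import Mathlib

section
/- Let A be a commutative ring containing the finite field k = F_q, let G = GL_2(A), and let H be a subgroup of G. Define ql(H) = { h ∈ A : T(h) ∈ gHg⁻¹ for all g ∈ G }, where T(h) is the upper unitriangular matrix with entry h. Then ql(H) is closed under addition and under multiplication by elements of k; i.e., ql(H) is a k-subspace of A. -/
open Matrix

/-- The upper unitriangular matrix `T(h)` as an element of `GL₂(A)`. -/
noncomputable def Tgl (A : Type*) [CommRing A] (h : A) : GL (Fin 2) A :=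
  Matrix.SpecialLinearGroup.toGL ⟨!![1, h; 0, 1], by simp [Matrix.det_fin_two_of]⟩

/-- The quasi-level of a subgroup `H` of `GL₂(A)`. -/
def quasiLevel (A : Type*) [CommRing A] (H : Subgroup (GL (Fin 2) A)) : Set A :=
  {h : A | ∀ g : GL (Fin 2) A, g⁻¹ * Tgl A h * g ∈ H}

lemma Tgl_mul (A : Type*) [CommRing A] (a b : A) :
    Tgl A a * Tgl A b = Tgl A (a + b) := by
  apply Units.ext
  ext i j
  fin_cases i <;> fin_cases j <;>
    simp [Tgl, Matrix.SpecialLinearGroup.toGL, Matrix.mul_apply, Fin.sum_univ_two, add_comm]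

/-- the diagonal unit diag(u,1) for a unit u with inverse v -/
def Dgl (A : Type*) [CommRing A] (u v : A) (huv : u * v = 1) : GL (Fin 2) A :=
  ⟨!![u, 0; 0, 1], !![v, 0; 0, 1],
    by ext i j; fin_cases i <;> fin_cases j <;>
      simp [Matrix.mul_apply, Fin.sum_univ_two, huv],
    by ext i j; fin_cases i <;> fin_cases j <;>
      simp [Matrix.mul_apply, Fin.sum_univ_two, mul_comm u v ▸ huv]⟩

lemma Dgl_conj (A : Type*) [CommRing A] (u v h : A) (huv : u * v = 1) :
    Dgl A u v huv * Tgl A h * (Dgl A u v huv)⁻¹ = Tgl A (u * h) := by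
  apply Units.ext
  ext i j
  fin_cases i <;> fin_cases j <;>
    simp [Dgl, Tgl, Matrix.SpecialLinearGroup.toGL, Matrix.mul_apply, Fin.sum_univ_two, huv]

theorem quasiLevel_add_smul_closed (k A : Type*) [Field k] [Fintype k] [CommRing A]
    [Algebra k A] (H : Subgroup (GL (Fin 2) A)) :
    (∀ h₁ h₂ : A, h₁ ∈ quasiLevel A H → h₂ ∈ quasiLevel A H → h₁ + h₂ ∈ quasiLevel A H) ∧
    (∀ (c : k) (h : A), h ∈ quasiLevel A H → c • h ∈ quasiLevel A H) := by
  constructor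
  · intro h₁ h₂ m₁ m₂ g
    have : g⁻¹ * Tgl A (h₁ + h₂) * g = (g⁻¹ * Tgl A h₁ * g) * (g⁻¹ * Tgl A h₂ * g) := by
      rw [← Tgl_mul]; group
    rw [this]
    exact H.mul_mem (m₁ g) (m₂ g)
  · intro c h hm g
    rcases eq_or_ne c 0 with rfl | hc
    · have : Tgl A ((0 : k) • h) = 1 := by
        apply Units.ext
        simp [Tgl, Matrix.SpecialLinearGroup.toGL, Matrix.one_fin_two]
      rw [this]
      simpa using H.one_mem
    · set u := algebraMap k A c
      have huv : u * algebraMap k A c⁻¹ = 1 := by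
        rw [← _root_.map_mul, mul_inv_cancel₀ hc, _root_.map_one]
      set D := Dgl A u (algebraMap k A c⁻¹) huv
      have key : Tgl A (c • h) = D * Tgl A h * D⁻¹ := by
        rw [Dgl_conj, Algebra.smul_def]
      have : g⁻¹ * Tgl A (c • h) * g = (D⁻¹ * g)⁻¹ * Tgl A h * (D⁻¹ * g) := by
        rw [key]; group
      rw [this]
      exact hm _
end

section
/- Let A be a commutative ring containing the finite field k=F_q with q > 2, G = GL_2(A), Γ = SL_2(A), and H a subgroup of G. Define ql(H) = {h ∈ A : T(h) ∈ gHg⁻¹ for all g ∈ G} and ql*(H) = {h ∈ A : T(h) ∈ gHg⁻¹ for all g ∈ Γ}. Then ql(H) = ql*(H). -/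
open Matrix

section Aux
variable {A : Type*} [CommRing A]

lemma Tgl_mul_s3 (h₁ h₂ : A) : Tgl A h₁ * Tgl A h₂ = Tgl A (h₁ + h₂) := by
  apply Units.ext
  show (!![1,h₁;0,1] * !![1,h₂;0,1] : Matrix (Fin 2) (Fin 2) A) = !![1,h₁+h₂;0,1]
  ext i j
  fin_cases i <;> fin_cases j <;> simp [Matrix.mul_apply, Fin.sum_univ_two] <;> ring

lemma Tgl_zero : Tgl A 0 = 1 := by
  apply Units.ext
  show (!![1,(0:A);0,1]) = (1 : Matrix (Fin 2) (Fin 2) A)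
  ext i j; fin_cases i <;> fin_cases j <;> simp [Matrix.one_apply]

def Dg (u : Aˣ) : GL (Fin 2) A :=
  ⟨!![(u:A),0;0,1], !![((u⁻¹:Aˣ):A),0;0,1],
   by ext i j; fin_cases i <;> fin_cases j <;> simp [Matrix.mul_apply, Fin.sum_univ_two, Matrix.one_apply],
   by ext i j; fin_cases i <;> fin_cases j <;> simp [Matrix.mul_apply, Fin.sum_univ_two, Matrix.one_apply]⟩

def Sg (u : Aˣ) : GL (Fin 2) A :=
  ⟨!![((u⁻¹:Aˣ):A),0;0,(u:A)], !![(u:A),0;0,((u⁻¹:Aˣ):A)],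
   by ext i j; fin_cases i <;> fin_cases j <;> simp [Matrix.mul_apply, Fin.sum_univ_two, Matrix.one_apply],
   by ext i j; fin_cases i <;> fin_cases j <;> simp [Matrix.mul_apply, Fin.sum_univ_two, Matrix.one_apply]⟩

lemma Sg_det (u : Aˣ) : Matrix.det ((Sg u : GL (Fin 2) A) : Matrix (Fin 2) (Fin 2) A) = 1 := by
  show Matrix.det !![((u⁻¹:Aˣ):A),0;0,(u:A)] = 1
  simp [Matrix.det_fin_two_of]

lemma Tgl_mul_Sg (u : Aˣ) (h : A) :
    Tgl A h * Sg u = Sg u * Tgl A ((u:A) * (u:A) * h) := by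
  apply Units.ext
  show (!![1,h;0,1] * !![((u⁻¹:Aˣ):A),0;0,(u:A)] : Matrix (Fin 2) (Fin 2) A)
      = !![((u⁻¹:Aˣ):A),0;0,(u:A)] * !![1,(u:A)*(u:A)*h;0,1]
  ext i j
  fin_cases i <;> fin_cases j <;>
    simp [Matrix.mul_apply, Fin.sum_univ_two] <;>
    rw [show ((u:A))*(u:A)*h = (u:A)*((u:A)*h) from by ring, Units.inv_mul_cancel_left, mul_comm]

lemma Tgl_mul_Dg (u : Aˣ) (h : A) :
    Tgl A h * Dg u = Dg u * Tgl A (((u⁻¹:Aˣ):A) * h) := by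
  apply Units.ext
  show (!![1,h;0,1] * !![(u:A),0;0,1] : Matrix (Fin 2) (Fin 2) A)
      = !![(u:A),0;0,1] * !![1,((u⁻¹:Aˣ):A)*h;0,1]
  ext i j
  fin_cases i <;> fin_cases j <;>
    simp [Matrix.mul_apply, Fin.sum_univ_two, Units.mul_inv_cancel_left]

lemma Dg_inv_det (u : Aˣ) :
    Matrix.det (((Dg u)⁻¹ : GL (Fin 2) A) : Matrix (Fin 2) (Fin 2) A) = ((u⁻¹:Aˣ):A) := by
  show Matrix.det !![((u⁻¹:Aˣ):A),0;0,1] = _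
  simp [Matrix.det_fin_two_of]

end Aux

open Polynomial in
lemma sum_two_sq (k : Type*) [Field k] [Fintype k] (x : k) :
    ∃ a b : k, a ^ 2 + b ^ 2 = x := by
  by_cases h2 : ringChar k = 2
  · obtain ⟨a, ha⟩ := FiniteField.isSquare_of_char_two h2 x
    exact ⟨a, 0, by rw [ha]; ring⟩
  · obtain ⟨a, b, hab⟩ := FiniteField.exists_root_sum_quadratic
      (f := (X ^ 2 : k[X])) (g := X ^ 2 - C x) (degree_X_pow 2)
      (degree_X_pow_sub_C (by norm_num) _) (FiniteField.odd_card_of_char_ne_two h2)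
    refine ⟨a, b, ?_⟩
    simp only [eval_pow, eval_sub, eval_C, eval_X, eval_add] at hab
    linear_combination hab

theorem quasiLevel_eq_quasiLevel_star (k A : Type*) [Field k] [Fintype k] [CommRing A]
    [Algebra k A] (hq : 2 < Fintype.card k)
    (hUnits : ∀ u : Aˣ, ∃ c : k, algebraMap k A c = (u : A))
    (H : Subgroup (GL (Fin 2) A)) :
    {h : A | ∀ g : GL (Fin 2) A, g⁻¹ * Tgl A h * g ∈ H} =
      {h : A | ∀ g : GL (Fin 2) A, Matrix.det (g : Matrix (Fin 2) (Fin 2) A) = 1 →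
        g⁻¹ * Tgl A h * g ∈ H} := by
  -- set of "Γ-quasi-level" elements
  set S : Set A := {h : A | ∀ g : GL (Fin 2) A,
      Matrix.det (g : Matrix (Fin 2) (Fin 2) A) = 1 → g⁻¹ * Tgl A h * g ∈ H} with hS
  -- S is closed under addition
  have Sadd : ∀ h₁ h₂ : A, h₁ ∈ S → h₂ ∈ S → h₁ + h₂ ∈ S := by
    intro h₁ h₂ H1 H2 g hg
    have : g⁻¹ * Tgl A (h₁ + h₂) * g = (g⁻¹ * Tgl A h₁ * g) * (g⁻¹ * Tgl A h₂ * g) := by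
      rw [← Tgl_mul_s3]; group
    rw [this]
    exact H.mul_mem (H1 g hg) (H2 g hg)
  -- 0 ∈ S
  have Szero : (0 : A) ∈ S := by
    intro g hg
    rw [Tgl_zero]
    simpa using H.one_mem
  -- S is closed under multiplication by squares of units
  have Ssq : ∀ (u : Aˣ) (h : A), h ∈ S → (u : A) * (u : A) * h ∈ S := by
    intro u h hh g hg
    have key : (Sg u)⁻¹ * (Tgl A h * Sg u) = Tgl A ((u:A) * (u:A) * h) := by
      rw [Tgl_mul_Sg]; group
    rw [show g⁻¹ * Tgl A ((u:A) * (u:A) * h) * g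
        = (Sg u * g)⁻¹ * Tgl A h * (Sg u * g) from by rw [← key]; group]
    apply hh
    rw [Units.val_mul, Matrix.det_mul, Sg_det, hg, one_mul]
  -- S is closed under multiplication by scalars from k
  have Sscal : ∀ (c : k) (h : A), h ∈ S → algebraMap k A c * h ∈ S := by
    intro c h hh
    obtain ⟨a, b, hab⟩ := sum_two_sq k c
    have expand : algebraMap k A c * h
        = algebraMap k A a * algebraMap k A a * h
          + algebraMap k A b * algebraMap k A b * h := by
      rw [← hab]
      push_cast [map_add, map_pow]
      ring
    rw [expand]
    have sq_mem : ∀ x : k, algebraMap k A x * algebraMap k A x * h ∈ S := by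
      intro x
      by_cases hx : x = 0
      · simpa [hx] using Szero
      · have hxu : IsUnit (algebraMap k A x) := by
          refine IsUnit.map (algebraMap k A) (Ne.isUnit hx)
        obtain ⟨v, hv⟩ := hxu
        rw [← hv]
        exact Ssq v h hh
    exact Sadd _ _ (sq_mem a) (sq_mem b)
  -- main equality
  ext h
  simp only [Set.mem_setOf_eq, hS]
  constructor
  · intro hh g _; exact hh g
  · intro hh g
    -- determinant of g as a unit
    set u : Aˣ := Units.map Matrix.detMonoidHom g with hu
    have hcoeu : (u : A) = Matrix.det (g : Matrix (Fin 2) (Fin 2) A) := rfl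
    set g' : GL (Fin 2) A := (Dg u)⁻¹ * g with hg'
    have hdetg' : Matrix.det ((g' : GL (Fin 2) A) : Matrix (Fin 2) (Fin 2) A) = 1 := by
      rw [hg', Units.val_mul, Matrix.det_mul, Dg_inv_det, ← hcoeu]
      exact Units.inv_mul u
    have hfac : g = Dg u * g' := by rw [hg']; group
    have hconj : (Dg u)⁻¹ * Tgl A h * Dg u = Tgl A (((u⁻¹:Aˣ):A) * h) := by
      rw [show (Dg u)⁻¹ * Tgl A h * Dg u
          = (Dg u)⁻¹ * (Tgl A h * Dg u) from by group, Tgl_mul_Dg]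
      group
    have : g⁻¹ * Tgl A h * g = g'⁻¹ * Tgl A (((u⁻¹:Aˣ):A) * h) * g' := by
      rw [← hconj, hfac]; group
    rw [this]
    -- (u⁻¹ : A) * h ∈ S
    obtain ⟨c, hc⟩ := hUnits u⁻¹
    have : ((u⁻¹:Aˣ):A) * h ∈ S := by
      rw [← hc]
      exact Sscal c h hh
    exact this g' hdetg'
end

section
/- Let A = F_q[t], Γ = SL_2(A), and N a normal subgroup of Γ containing the commutator subgroup Γ'. Then Γ/N is isomorphic to A/ql(N), where ql(N) = {a ∈ A : T(a) ∈ N}. -/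
open Polynomial Matrix

/-- `a ↦ T(a) = [[1,a],[0,1]]` as a homomorphism from the additive group of `A`
(written multiplicatively) to `SL₂(A)`. -/
def Thom (A : Type*) [CommRing A] : Multiplicative A →* Matrix.SpecialLinearGroup (Fin 2) A :=
  MonoidHom.mk' (fun a => ⟨!![1, a.toAdd; 0, 1], by simp [Matrix.det_fin_two_of]⟩)
    (fun a b => Subtype.ext (by
      ext i j
      fin_cases i <;> fin_cases j <;>
        first
        | (simp [Matrix.SpecialLinearGroup.coe_mul, Matrix.mul_fin_two, add_comm]; done)
        | (erw [Matrix.SpecialLinearGroup.coe_mul]; simp [Matrix.mul_fin_two, add_comm]; done)))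

/-!
Modulo `N ⊇ Γ'` the group `Γ = SL₂(A)` is abelian, so conjugating by the Weyl element
`S = [[0,-1],[1,0]]` shows that every lower unipotent `L(a)` is congruent to `T(-a)`, and `S`
itself is a product of unipotents. Left multiplication by `S * T(-q)`, with `q` the Euclidean
quotient of the top-left by the bottom-left entry, replaces the bottom-left entry by the
remainder; so the Euclidean algorithm reduces any matrix to an upper triangular one, and such
a matrix is `S⁻¹` times unipotents. Hence `a ↦ T(a) N` maps `A` onto `Γ/N`, with kernel
`ql(N)`.
-/

namespace SL2

section CommRing

variable {A : Type*} [CommRing A]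

def lowerT (a : A) : SpecialLinearGroup (Fin 2) A :=
  ⟨!![1, 0; a, 1], by simp [det_fin_two_of]⟩

def weyl : SpecialLinearGroup (Fin 2) A :=
  ⟨!![0, -1; 1, 0], by simp [det_fin_two_of]⟩

lemma coe_lowerT (a : A) :
    (lowerT a : Matrix (Fin 2) (Fin 2) A) = !![1, 0; a, 1] := rfl

lemma coe_weyl :
    ((weyl : SpecialLinearGroup (Fin 2) A) : Matrix (Fin 2) (Fin 2) A) = !![0, -1; 1, 0] := rfl

lemma coe_Thom (a : A) :
    (Thom A (Multiplicative.ofAdd a) : Matrix (Fin 2) (Fin 2) A) = !![1, a; 0, 1] := rfl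

lemma weyl_mul_Thom (a : A) : weyl * Thom A (Multiplicative.ofAdd a) = lowerT (-a) * weyl := by
  apply Subtype.ext
  simp only [Matrix.SpecialLinearGroup.coe_mul, coe_Thom, coe_weyl, coe_lowerT]
  ext i j
  fin_cases i <;> fin_cases j <;> simp

lemma weyl_eq : (weyl : SpecialLinearGroup (Fin 2) A) =
    Thom A (Multiplicative.ofAdd (-1)) * lowerT 1 * Thom A (Multiplicative.ofAdd (-1)) := by
  apply Subtype.ext
  simp only [Matrix.SpecialLinearGroup.coe_mul, coe_Thom, coe_weyl, coe_lowerT]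
  ext i j
  fin_cases i <;> fin_cases j <;> simp

lemma weyl_mul_of_apply_one_zero_eq_zero (g : SpecialLinearGroup (Fin 2) A) (hg : g 1 0 = 0) :
    weyl * g = Thom A (Multiplicative.ofAdd (-g 1 1)) * lowerT (g 0 0) *
      Thom A (Multiplicative.ofAdd ((g 0 1 - 1) * g 1 1)) := by
  have hdet : g 0 0 * g 1 1 = 1 := by
    have h := g.det_coe
    rw [det_fin_two, hg] at h
    linear_combination h
  apply Subtype.ext
  simp only [Matrix.SpecialLinearGroup.coe_mul, coe_Thom, coe_weyl, coe_lowerT]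
  ext i j
  fin_cases i <;> fin_cases j <;> simp [mul_apply, Fin.sum_univ_two, hg]
  · linear_combination hdet
  · linear_combination -(g 0 1 - 1) * g 1 1 * hdet
  · linear_combination -(g 0 1 - 1) * hdet

lemma weyl_mul_Thom_mul_apply_one_zero (q : A) (g : SpecialLinearGroup (Fin 2) A) :
    (weyl * Thom A (Multiplicative.ofAdd (-q)) * g : SpecialLinearGroup (Fin 2) A) 1 0 =
      g 0 0 - g 1 0 * q := by
  simp [Matrix.SpecialLinearGroup.coe_mul, coe_Thom, coe_weyl, mul_apply, Fin.sum_univ_two]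
  ring

section AbelianQuotient

variable {G : Type*} [Group G] (f : SpecialLinearGroup (Fin 2) A →* G)

lemma map_mul_comm_of_commutator_le_ker (hf : commutator (SpecialLinearGroup (Fin 2) A) ≤ f.ker)
    (x y : SpecialLinearGroup (Fin 2) A) : f x * f y = f y * f x := by
  rw [← commutatorElement_eq_one_iff_mul_comm, ← map_commutatorElement, ← MonoidHom.mem_ker]
  exact hf (Subgroup.commutator_mem_commutator (Subgroup.mem_top x) (Subgroup.mem_top y))

lemma map_lowerT_mem_range (hf : commutator (SpecialLinearGroup (Fin 2) A) ≤ f.ker) (a : A) :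
    f (lowerT a) ∈ (f.comp (Thom A)).range := by
  have h := congrArg f (weyl_mul_Thom (-a))
  rw [map_mul, map_mul, map_mul_comm_of_commutator_le_ker f hf, neg_neg] at h
  exact ⟨_, mul_right_cancel h⟩

lemma map_weyl_mem_range (hf : commutator (SpecialLinearGroup (Fin 2) A) ≤ f.ker) :
    f weyl ∈ (f.comp (Thom A)).range := by
  rw [weyl_eq, map_mul, map_mul]
  exact mul_mem (mul_mem ⟨_, rfl⟩ (map_lowerT_mem_range f hf 1)) ⟨_, rfl⟩

lemma map_mem_range_of_apply_one_zero_eq_zero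
    (hf : commutator (SpecialLinearGroup (Fin 2) A) ≤ f.ker)
    (g : SpecialLinearGroup (Fin 2) A) (hg : g 1 0 = 0) :
    f g ∈ (f.comp (Thom A)).range := by
  have h := congrArg f (weyl_mul_of_apply_one_zero_eq_zero g hg)
  rw [map_mul, map_mul, map_mul, ← eq_inv_mul_iff_mul_eq] at h
  rw [h]
  exact mul_mem (inv_mem (map_weyl_mem_range f hf))
    (mul_mem (mul_mem ⟨_, rfl⟩ (map_lowerT_mem_range f hf _)) ⟨_, rfl⟩)

end AbelianQuotient

end CommRing

theorem map_mem_range_comp_Thom {A : Type*} [EuclideanDomain A] {G : Type*} [Group G]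
    (f : SpecialLinearGroup (Fin 2) A →* G)
    (hf : commutator (SpecialLinearGroup (Fin 2) A) ≤ f.ker) (g : SpecialLinearGroup (Fin 2) A) :
    f g ∈ (f.comp (Thom A)).range := by
  suffices h : ∀ c (g : SpecialLinearGroup (Fin 2) A), g 1 0 = c →
      f g ∈ (f.comp (Thom A)).range from h _ g rfl
  intro c
  induction c using (EuclideanDomain.r_wellFounded (R := A)).induction with
  | _ c ih =>
  rintro g rfl
  by_cases hc : g 1 0 = 0
  · exact map_mem_range_of_apply_one_zero_eq_zero f hf g hc
  set e := weyl * Thom A (Multiplicative.ofAdd (-(g 0 0 / g 1 0)))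
  have hred : f (e * g) ∈ (f.comp (Thom A)).range := by
    refine ih _ ?_ _ (weyl_mul_Thom_mul_apply_one_zero _ g)
    rw [← EuclideanDomain.mod_eq_sub_mul_div]
    exact EuclideanDomain.mod_lt _ hc
  rw [← inv_mul_cancel_left e g, map_mul, map_inv, map_mul]
  exact mul_mem (inv_mem (mul_mem (map_weyl_mem_range f hf) ⟨_, rfl⟩)) hred

end SL2

theorem quotient_iso_A_mod_quasiLevel_general (F : Type*) [Field F]
    (N : Subgroup (Matrix.SpecialLinearGroup (Fin 2) F[X])) [N.Normal]
    (hN : commutator (Matrix.SpecialLinearGroup (Fin 2) F[X]) ≤ N) :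
    (∀ a : F[X],
        Multiplicative.ofAdd a ∈
            MonoidHom.ker ((QuotientGroup.mk' N).comp (Thom F[X])) ↔
          Thom F[X] (Multiplicative.ofAdd a) ∈ N) ∧
      Nonempty
        ((Matrix.SpecialLinearGroup (Fin 2) F[X] ⧸ N) ≃*
          (Multiplicative F[X] ⧸ MonoidHom.ker ((QuotientGroup.mk' N).comp (Thom F[X])))) := by
  refine ⟨fun a => ?_, ⟨(QuotientGroup.quotientKerEquivOfSurjective _ ?_).symm⟩⟩
  · rw [MonoidHom.mem_ker, MonoidHom.comp_apply, QuotientGroup.mk'_apply,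
      QuotientGroup.eq_one_iff]
  · rintro ⟨g⟩
    exact SL2.map_mem_range_comp_Thom _ (by rwa [QuotientGroup.ker_mk']) g

theorem quotient_iso_A_mod_quasiLevel (F : Type*) [Field F] [Fintype F]
    (hq : Fintype.card F ≤ 3)
    (N : Subgroup (Matrix.SpecialLinearGroup (Fin 2) F[X])) [N.Normal]
    (hN : commutator (Matrix.SpecialLinearGroup (Fin 2) F[X]) ≤ N) :
    (∀ a : F[X],
        Multiplicative.ofAdd a ∈
            MonoidHom.ker ((QuotientGroup.mk' N).comp (Thom F[X])) ↔
          Thom F[X] (Multiplicative.ofAdd a) ∈ N) ∧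
      Nonempty
        ((Matrix.SpecialLinearGroup (Fin 2) F[X] ⧸ N) ≃*
          (Multiplicative F[X] ⧸ MonoidHom.ker ((QuotientGroup.mk' N).comp (Thom F[X])))) :=
  quotient_iso_A_mod_quasiLevel_general F N hN
end
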